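/- (Main suboptimality bound.) Under assumptions (i)–(iii), suppose additionally that ‖a − b‖ ≤ C0 for all a, b ∈ S. Let s*, s' ∈ S, let N ≥ 1 be an integer such that s̃ := ((N−1)/N) · s* + (1/N) · s' lies in S, and let Q̂ : X × A → ℝ be a learned Q-function satisfying the DQN approximation guarantee max_{(x,a)} |Q̂(x,a) − Q_{s̃}(x,a)| ≤ C_DQN / √(N_s) for some constants C_DQN ≥ 0 and buffer size N_s > 0. Then max_{(x,a)} |Q̂(x,a) − Q_{s*}(x,a)| ≤ C_DQN / √(N_s) + C_MF / N, where C_MF = C0 · ((1 − α) L_r + α R_max |X| L_p) / (1 − α)². -/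

import Mathlib

/-!
`Q_s` is the fixed point of the `α`-contraction `T_s`, so
`‖Q_t - Q_s‖ ≤ ‖T_s Q_t - T_t Q_t‖ / (1 - α)`.
Comparing the two Bellman operators at `Q_t` costs `L_r ‖s - t‖` from the rewards and
`α |X| L_p ‖s - t‖ ‖Q_t‖` from the kernels, and `‖Q_t‖ ≤ R_max / (1 - α)`; this makes
`s ↦ Q_s` Lipschitz with constant `((1 - α) L_r + α R_max |X| L_p) / (1 - α)²`. The perturbed mean
field satisfies `s̃ - s* = (s' - s*) / N`, hence `‖s̃ - s*‖ ≤ C0 / N`, and the triangle inequality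
through `Q_{s̃}` adds the DQN error.
-/

open Finset

/-- The Bellman optimality operator
`(T Q)(x,a) = r(x,a) + α * Σ_{x'} p(x'|x,a) * max_{a'} Q(x',a')`. -/
noncomputable def bellmanOp {X A : Type*} [Fintype X] [Fintype A] [Nonempty A]
    (r : X × A → ℝ) (p : X × A → X → ℝ) (α : ℝ) (Q : X × A → ℝ) : X × A → ℝ :=
  fun xa => r xa + α * ∑ x' : X, p xa x' *
    Finset.univ.sup' Finset.univ_nonempty (fun a' : A => Q (x', a'))

/-- The sup norm `‖Q‖∞ = max_{(x,a)} |Q(x,a)|`. -/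
noncomputable def supNorm {X A : Type*} [Fintype X] [Fintype A] [Nonempty X] [Nonempty A]
    (Q : X × A → ℝ) : ℝ :=
  Finset.univ.sup' Finset.univ_nonempty (fun xa : X × A => |Q xa|)

theorem dist_le_div_of_contraction {M : Type*} [PseudoMetricSpace M] {f : M → M} {K : ℝ}
    (hK : K < 1) (hf : ∀ x y, dist (f x) (f y) ≤ K * dist x y) {y : M} (hy : f y = y) (x : M) :
    dist x y ≤ dist x (f x) / (1 - K) := by
  have hfx := hf x y
  rw [hy] at hfx
  rw [le_div_iff₀ (by linarith)]
  linarith [dist_triangle x (f x) y]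

theorem abs_sum_mul_le_of_stochastic {ι : Type*} [Fintype ι] {w m : ι → ℝ} {K : ℝ}
    (hw0 : ∀ i, 0 ≤ w i) (hw1 : ∑ i, w i = 1) (hm : ∀ i, |m i| ≤ K) :
    |∑ i, w i * m i| ≤ K :=
  calc |∑ i, w i * m i| ≤ ∑ i, w i * K := by
        refine (abs_sum_le_sum_abs _ _).trans (sum_le_sum fun i _ => ?_)
        rw [abs_mul, abs_of_nonneg (hw0 i)]
        exact mul_le_mul_of_nonneg_left (hm i) (hw0 i)
    _ = K := by rw [← sum_mul, hw1, one_mul]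

theorem abs_sum_mul_le_card_mul {ι : Type*} [Fintype ι] {u m : ι → ℝ} {L K : ℝ}
    (hu : ∀ i, |u i| ≤ L) (hm : ∀ i, |m i| ≤ K) :
    |∑ i, u i * m i| ≤ Fintype.card ι * (L * K) :=
  calc |∑ i, u i * m i| ≤ ∑ _i : ι, L * K := by
        refine (abs_sum_le_sum_abs _ _).trans (sum_le_sum fun i _ => ?_)
        rw [abs_mul]
        exact mul_le_mul (hu i) (hm i) (abs_nonneg _) ((abs_nonneg _).trans (hu i))
    _ = Fintype.card ι * (L * K) := by rw [sum_const, card_univ, nsmul_eq_mul]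

theorem sup'_le_sup'_add_of_le_add {ι : Type*} {s : Finset ι} (hs : s.Nonempty) {f g : ι → ℝ}
    {B : ℝ} (h : ∀ i ∈ s, f i ≤ g i + B) : s.sup' hs f ≤ s.sup' hs g + B :=
  sup'_le hs f fun i hi => (h i hi).trans (by gcongr; exact le_sup' g hi)

theorem abs_sup'_sub_sup'_le {ι : Type*} {s : Finset ι} (hs : s.Nonempty) {f g : ι → ℝ}
    {B : ℝ} (h : ∀ i ∈ s, |f i - g i| ≤ B) : |s.sup' hs f - s.sup' hs g| ≤ B := by
  rw [abs_sub_le_iff, sub_le_iff_le_add, sub_le_iff_le_add, add_comm B, add_comm B]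
  exact ⟨sup'_le_sup'_add_of_le_add hs fun i hi => by linarith [(abs_le.mp (h i hi)).2],
    sup'_le_sup'_add_of_le_add hs fun i hi => by linarith [(abs_le.mp (h i hi)).1]⟩

section Bellman

variable {X A : Type*} [Fintype X] [Fintype A] [Nonempty A]

def IsStochastic (p : X × A → X → ℝ) : Prop :=
  (∀ xa x', 0 ≤ p xa x') ∧ ∀ xa, ∑ x', p xa x' = 1

theorem supNorm_eq_norm [Nonempty X] (Q : X × A → ℝ) : supNorm Q = ‖Q‖ :=
  le_antisymm (sup'_le _ _ fun xa _ => norm_le_pi_norm Q xa)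
    ((pi_norm_le_iff_of_nonempty _).2 fun xa => le_sup' (fun xa => |Q xa|) (mem_univ xa))

theorem abs_sup'_le_norm (Q : X × A → ℝ) (x : X) :
    |univ.sup' univ_nonempty (fun a : A => Q (x, a))| ≤ ‖Q‖ := by
  obtain ⟨a, -, ha⟩ := exists_mem_eq_sup' univ_nonempty fun a : A => Q (x, a)
  rw [ha]
  exact norm_le_pi_norm Q (x, a)

theorem abs_sup'_sub_sup'_le_norm (Q Q' : X × A → ℝ) (x : X) :
    |univ.sup' univ_nonempty (fun a : A => Q (x, a)) -
      univ.sup' univ_nonempty (fun a : A => Q' (x, a))| ≤ ‖Q - Q'‖ :=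
  abs_sup'_sub_sup'_le _ fun a _ => norm_le_pi_norm (Q - Q') (x, a)

variable {r r' : X × A → ℝ} {p p' : X × A → X → ℝ} {α : ℝ}

theorem norm_bellmanOp_sub_bellmanOp_le [Nonempty X] (hα : 0 ≤ α) (hp : IsStochastic p)
    (Q Q' : X × A → ℝ) :
    ‖bellmanOp r p α Q - bellmanOp r p α Q'‖ ≤ α * ‖Q - Q'‖ := by
  refine (pi_norm_le_iff_of_nonneg (by positivity)).2 fun xa => ?_
  have hexp : bellmanOp r p α Q xa - bellmanOp r p α Q' xa =
      α * ∑ x', p xa x' * (univ.sup' univ_nonempty (fun a : A => Q (x', a)) -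
        univ.sup' univ_nonempty (fun a : A => Q' (x', a))) := by
    simp only [bellmanOp, mul_sub, sum_sub_distrib]; ring
  rw [Pi.sub_apply, Real.norm_eq_abs, hexp, abs_mul, abs_of_nonneg hα]
  exact mul_le_mul_of_nonneg_left (abs_sum_mul_le_of_stochastic (hp.1 xa) (hp.2 xa)
    fun x' => abs_sup'_sub_sup'_le_norm Q Q' x') hα

theorem norm_bellmanOp_sub_bellmanOp_le_of_abs_sub_le [Nonempty X] (hα : 0 ≤ α) {εr εp : ℝ}
    (hr : ∀ xa, |r xa - r' xa| ≤ εr) (hp : ∀ xa x', |p xa x' - p' xa x'| ≤ εp)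
    (Q : X × A → ℝ) :
    ‖bellmanOp r p α Q - bellmanOp r' p' α Q‖ ≤ εr + α * (Fintype.card X * (εp * ‖Q‖)) := by
  refine (pi_norm_le_iff_of_nonempty _).2 fun xa => ?_
  have hexp : bellmanOp r p α Q xa - bellmanOp r' p' α Q xa = (r xa - r' xa) +
      α * ∑ x', (p xa x' - p' xa x') * univ.sup' univ_nonempty (fun a : A => Q (x', a)) := by
    simp only [bellmanOp, sub_mul, sum_sub_distrib]; ring
  rw [Pi.sub_apply, Real.norm_eq_abs, hexp]
  refine (abs_add_le _ _).trans (add_le_add (hr xa) ?_)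
  rw [abs_mul, abs_of_nonneg hα]
  exact mul_le_mul_of_nonneg_left
    (abs_sum_mul_le_card_mul (hp xa) fun x' => abs_sup'_le_norm Q x') hα

theorem norm_le_of_bellmanOp_eq [Nonempty X] (hα0 : 0 ≤ α) (hα1 : α < 1) (hp : IsStochastic p)
    {R : ℝ} (hr : ∀ xa, |r xa| ≤ R) {Q : X × A → ℝ} (hQ : bellmanOp r p α Q = Q) :
    ‖Q‖ ≤ R / (1 - α) := by
  have hQ_le : ‖Q‖ ≤ R + α * ‖Q‖ := by
    refine (pi_norm_le_iff_of_nonempty _).2 fun xa => ?_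
    rw [Real.norm_eq_abs, ← congrFun hQ xa]
    refine (abs_add_le _ _).trans (add_le_add (hr xa) ?_)
    rw [abs_mul, abs_of_nonneg hα0]
    exact mul_le_mul_of_nonneg_left (abs_sum_mul_le_of_stochastic (hp.1 xa) (hp.2 xa)
      fun x' => abs_sup'_le_norm Q x') hα0
  rw [le_div_iff₀ (by linarith)]
  linarith

theorem norm_sub_le_of_bellmanOp_eq [Nonempty X] (hα0 : 0 ≤ α) (hα1 : α < 1)
    (hp : IsStochastic p) (hp' : IsStochastic p') {R εr εp : ℝ} (hr' : ∀ xa, |r' xa| ≤ R)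
    (hεp : 0 ≤ εp) (hr : ∀ xa, |r xa - r' xa| ≤ εr) (hpp : ∀ xa x', |p xa x' - p' xa x'| ≤ εp)
    {Q Q' : X × A → ℝ} (hQ : bellmanOp r p α Q = Q) (hQ' : bellmanOp r' p' α Q' = Q') :
    ‖Q - Q'‖ ≤ (εr + α * (Fintype.card X * (εp * (R / (1 - α))))) / (1 - α) := by
  have hcontr : ∀ Q₁ Q₂, dist (bellmanOp r p α Q₁) (bellmanOp r p α Q₂) ≤ α * dist Q₁ Q₂ := by
    simpa only [dist_eq_norm] using norm_bellmanOp_sub_bellmanOp_le hα0 hp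
  rw [← dist_eq_norm, dist_comm]
  refine (dist_le_div_of_contraction hα1 hcontr hQ Q').trans ?_
  gcongr
  rw [dist_comm, dist_eq_norm]
  nth_rewrite 2 [← hQ']
  refine (norm_bellmanOp_sub_bellmanOp_le_of_abs_sub_le hα0 hr hpp Q').trans ?_
  gcongr
  exact norm_le_of_bellmanOp_eq hα0 hα1 hp' hr' hQ'

end Bellman

theorem norm_mix_sub_left {E : Type*} [SeminormedAddCommGroup E] [NormedSpace ℝ E] {N : ℝ}
    (hN : 0 < N) (a b : E) : ‖((N - 1) / N) • a + (1 / N) • b - a‖ = ‖b - a‖ / N := by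
  have hmix : ((N - 1) / N) • a + (1 / N) • b - a = (1 / N) • (b - a) := by
    rw [sub_div, div_self hN.ne', sub_smul, one_smul, smul_sub]
    abel
  rw [hmix, norm_smul, Real.norm_of_nonneg (by positivity), one_div_mul_eq_div]

theorem dqn_suboptimality_bound_general
    {X A : Type*} [Fintype X] [Fintype A] [Nonempty X] [Nonempty A]
    {E : Type*} [NormedAddCommGroup E] [NormedSpace ℝ E]
    (S : Set E)
    (α : ℝ) (hα0 : 0 ≤ α) (hα1 : α < 1)
    (r : E → X × A → ℝ) (p : E → X × A → X → ℝ)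
    (hp0 : ∀ s ∈ S, ∀ xa x', 0 ≤ p s xa x')
    (hp1 : ∀ s ∈ S, ∀ xa, ∑ x' : X, p s xa x' = 1)
    (Rmax : ℝ) (hRmax : 0 ≤ Rmax)
    (hR : ∀ s ∈ S, ∀ xa : X × A, |r s xa| ≤ Rmax)
    (Lr : ℝ) (hLr0 : 0 ≤ Lr)
    (hLr : ∀ s ∈ S, ∀ s' ∈ S, ∀ xa : X × A, |r s xa - r s' xa| ≤ Lr * ‖s - s'‖)
    (Lp : ℝ) (hLp0 : 0 ≤ Lp)
    (hLp : ∀ s ∈ S, ∀ s' ∈ S, ∀ xa x', |p s xa x' - p s' xa x'| ≤ Lp * ‖s - s'‖)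
    (Q : E → X × A → ℝ)
    (hQfix : ∀ s ∈ S, bellmanOp (r s) (p s) α (Q s) = Q s)
    (C0 : ℝ) (hC0 : ∀ a ∈ S, ∀ b ∈ S, ‖a - b‖ ≤ C0)
    (sstar s' : E) (hsstar : sstar ∈ S) (hs' : s' ∈ S)
    (N : ℕ) (hN : 1 ≤ N)
    (hstilde : ((((N : ℝ) - 1) / N) • sstar + ((1 : ℝ) / N) • s') ∈ S)
    (CDQN Ns : ℝ)
    (Qhat : X × A → ℝ)
    (hDQN : supNorm (fun xa =>
        Qhat xa - Q ((((N : ℝ) - 1) / N) • sstar + ((1 : ℝ) / N) • s') xa) ≤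
      CDQN / Real.sqrt Ns) :
    supNorm (fun xa => Qhat xa - Q sstar xa) ≤
      CDQN / Real.sqrt Ns +
        C0 * ((1 - α) * Lr + α * Rmax * (Fintype.card X) * Lp) / (1 - α) ^ 2 / N := by
  set stilde : E := (((N : ℝ) - 1) / N) • sstar + ((1 : ℝ) / N) • s'
  have hN0 : (0 : ℝ) < N := by exact_mod_cast hN
  have hα : 0 < 1 - α := by linarith
  have hstoch : ∀ s ∈ S, IsStochastic (p s) := fun s hs => ⟨hp0 s hs, hp1 s hs⟩
  have hdist : ‖stilde - sstar‖ ≤ C0 / N := by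
    rw [norm_mix_sub_left hN0]
    gcongr
    exact hC0 s' hs' sstar hsstar
  have hQ := norm_sub_le_of_bellmanOp_eq hα0 hα1 (hstoch stilde hstilde)
    (hstoch sstar hsstar) (hR sstar hsstar) (by positivity) (hLr stilde hstilde sstar hsstar)
    (hLp stilde hstilde sstar hsstar) (hQfix stilde hstilde) (hQfix sstar hsstar)
  rw [supNorm_eq_norm] at hDQN ⊢
  calc ‖Qhat - Q sstar‖ ≤ ‖Qhat - Q stilde‖ + ‖Q stilde - Q sstar‖ :=
        norm_sub_le_norm_sub_add_norm_sub _ _ _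
    _ ≤ CDQN / √Ns + (Lr * ‖stilde - sstar‖ + α * (Fintype.card X *
          (Lp * ‖stilde - sstar‖ * (Rmax / (1 - α))))) / (1 - α) := add_le_add hDQN hQ
    _ ≤ CDQN / √Ns + (Lr * (C0 / N) + α * (Fintype.card X *
          (Lp * (C0 / N) * (Rmax / (1 - α))))) / (1 - α) := by gcongr
    _ = _ := by field_simp

/-- **Main suboptimality bound.** Under assumptions (i)–(iii), with diameter
of `S` bounded by `C0`: for `s*, s' ∈ S`, `N ≥ 1` with `s̃ = ((N−1)/N) • s* + (1/N) • s' ∈ S`,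
and a learned Q-function `Q̂` satisfying `max_{(x,a)} |Q̂(x,a) − Q_{s̃}(x,a)| ≤ C_DQN/√N_s`,
one has `max_{(x,a)} |Q̂(x,a) − Q_{s*}(x,a)| ≤ C_DQN/√N_s + C_MF/N`, where
`C_MF = C0 * ((1 − α) L_r + α R_max |X| L_p) / (1 − α)²`. -/
theorem dqn_suboptimality_bound
    {X A : Type*} [Fintype X] [Fintype A] [Nonempty X] [Nonempty A]
    {E : Type*} [NormedAddCommGroup E] [NormedSpace ℝ E]
    (S : Set E) (hS : S.Nonempty)
    (α : ℝ) (hα0 : 0 ≤ α) (hα1 : α < 1)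
    (r : E → X × A → ℝ) (p : E → X × A → X → ℝ)
    (hp0 : ∀ s ∈ S, ∀ xa x', 0 ≤ p s xa x')
    (hp1 : ∀ s ∈ S, ∀ xa, ∑ x' : X, p s xa x' = 1)
    (Rmax : ℝ) (hRmax : 0 ≤ Rmax)
    (hR : ∀ s ∈ S, ∀ xa : X × A, |r s xa| ≤ Rmax)
    (Lr : ℝ) (hLr0 : 0 ≤ Lr)
    (hLr : ∀ s ∈ S, ∀ s' ∈ S, ∀ xa : X × A, |r s xa - r s' xa| ≤ Lr * ‖s - s'‖)
    (Lp : ℝ) (hLp0 : 0 ≤ Lp)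
    (hLp : ∀ s ∈ S, ∀ s' ∈ S, ∀ xa x', |p s xa x' - p s' xa x'| ≤ Lp * ‖s - s'‖)
    (Q : E → X × A → ℝ)
    (hQfix : ∀ s ∈ S, bellmanOp (r s) (p s) α (Q s) = Q s)
    (C0 : ℝ) (hC0 : ∀ a ∈ S, ∀ b ∈ S, ‖a - b‖ ≤ C0)
    (sstar s' : E) (hsstar : sstar ∈ S) (hs' : s' ∈ S)
    (N : ℕ) (hN : 1 ≤ N)
    (hstilde : ((((N : ℝ) - 1) / N) • sstar + ((1 : ℝ) / N) • s') ∈ S)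
    (CDQN Ns : ℝ) (hCDQN : 0 ≤ CDQN) (hNs : 0 < Ns)
    (Qhat : X × A → ℝ)
    (hDQN : supNorm (fun xa =>
        Qhat xa - Q ((((N : ℝ) - 1) / N) • sstar + ((1 : ℝ) / N) • s') xa) ≤
      CDQN / Real.sqrt Ns) :
    supNorm (fun xa => Qhat xa - Q sstar xa) ≤
      CDQN / Real.sqrt Ns +
        C0 * ((1 - α) * Lr + α * Rmax * (Fintype.card X) * Lp) / (1 - α) ^ 2 / N :=
  dqn_suboptimality_bound_general S α hα0 hα1 r p hp0 hp1 Rmax hRmax hR Lr hLr0 hLr Lp hLp0 hLp Q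
    hQfix C0 hC0 sstar s' hsstar hs' N hN hstilde CDQN Ns Qhat hDQN
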